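/- arXiv:2303.09903 — 2 statements merged into one kernel-verified Lean document; each statement's English description precedes it below -/
import Mathlib

section
/- Let H be a connected k-uniform hypergraph with k ≥ 3. Then the smallest signless Laplacian eigenvalue of H is strictly positive (it cannot be zero). -/
open Finset

/-- The set of hyperedges containing both `i` and `j`. -/
def edgesBetween {n : ℕ} (E : Finset (Finset (Fin n))) (i j : Fin n) :
    Finset (Finset (Fin n)) :=
  E.filter fun e => i ∈ e ∧ j ∈ e

/-- The degree of vertex `i`: the number of hyperedges containing `i`. -/
def hdeg {n : ℕ} (E : Finset (Finset (Fin n))) (i : Fin n) : ℕ :=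
  (E.filter fun e => i ∈ e).card

/-- Two (distinct) vertices are adjacent if some hyperedge contains both. -/
def Adj {n : ℕ} (E : Finset (Finset (Fin n))) (i j : Fin n) : Prop :=
  i ≠ j ∧ ∃ e ∈ E, i ∈ e ∧ j ∈ e

/-- The neighbours of a vertex. -/
noncomputable def neighbors {n : ℕ} (E : Finset (Finset (Fin n))) (i : Fin n) :
    Finset (Fin n) :=
  @Finset.filter _ (fun j => Adj E i j) (Classical.decPred _) Finset.univ

/-- Banerjee's adjacency matrix of a hypergraph: `A i j = ∑_{e ∋ i,j} 1/(|e|-1)`. -/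
noncomputable def adjMat {n : ℕ} (E : Finset (Finset (Fin n))) :
    Matrix (Fin n) (Fin n) ℝ :=
  Matrix.of fun i j =>
    if i = j then 0 else ∑ e ∈ edgesBetween E i j, 1 / ((e.card : ℝ) - 1)

/-- The signless Laplacian matrix `Q = D + A`. -/
noncomputable def signlessLap {n : ℕ} (E : Finset (Finset (Fin n))) :
    Matrix (Fin n) (Fin n) ℝ :=
  Matrix.diagonal (fun i => (hdeg E i : ℝ)) + adjMat E

/-- Largest eigenvalue of a real matrix. -/
noncomputable def qmax {n : ℕ} (M : Matrix (Fin n) (Fin n) ℝ) : ℝ :=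
  sSup (spectrum ℝ M)

/-- Smallest eigenvalue of a real matrix. -/
noncomputable def qmin {n : ℕ} (M : Matrix (Fin n) (Fin n) ℝ) : ℝ :=
  sInf (spectrum ℝ M)

/-- A hypergraph is `k`-uniform if every hyperedge has exactly `k` vertices. -/
def IsUniform {n : ℕ} (k : ℕ) (E : Finset (Finset (Fin n))) : Prop :=
  ∀ e ∈ E, e.card = k

/-- A hypergraph is connected if any two vertices are joined by a walk. -/
def Conn {n : ℕ} (E : Finset (Finset (Fin n))) : Prop :=
  ∀ i j : Fin n, Relation.ReflTransGen (Adj E) i j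

/-!
The quadratic form of `Q = D + A` splits over the hyperedges: an edge `e` contributes
`∑_{i∈e} xᵢ² + ((∑_{i∈e} xᵢ)² - ∑_{i∈e} xᵢ²)/(|e|-1) = ((|e|-2) ∑_{i∈e} xᵢ² + (∑_{i∈e} xᵢ)²)/(|e|-1)`,
which for `|e| ≥ 3` vanishes only if `x` vanishes on `e`. In a connected hypergraph with at least
one nonempty edge every vertex lies on an edge, so `Q` is positive definite.
-/

open Matrix

lemma sum_sum_ite_ne_eq_sq_sub {ι R : Type*} [CommRing R] [DecidableEq ι] (s : Finset ι)
    (f : ι → R) :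
    ∑ i ∈ s, ∑ j ∈ s, (if i = j then 0 else f i * f j)
      = (∑ i ∈ s, f i) ^ 2 - ∑ i ∈ s, f i ^ 2 := by
  rw [sq, sum_mul_sum, ← sum_sub_distrib]
  refine sum_congr rfl fun i hi => ?_
  rw [sum_ite, sum_const_zero, zero_add, filter_ne, eq_sub_iff_add_eq, sq,
    sum_erase_add s _ hi]

noncomputable def edgeQuadForm {ι : Type*} (e : Finset ι) (x : ι → ℝ) : ℝ :=
  ∑ i ∈ e, x i ^ 2 + ((∑ i ∈ e, x i) ^ 2 - ∑ i ∈ e, x i ^ 2) / (#e - 1)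

lemma edgeQuadForm_eq_div {ι : Type*} {e : Finset ι} (he : 2 ≤ #e) (x : ι → ℝ) :
    edgeQuadForm e x = ((#e - 2) * ∑ i ∈ e, x i ^ 2 + (∑ i ∈ e, x i) ^ 2) / (#e - 1) := by
  have hne : (#e : ℝ) - 1 ≠ 0 := by
    have : (2 : ℝ) ≤ #e := by exact_mod_cast he
    linarith
  rw [edgeQuadForm, eq_div_iff hne, add_mul, div_mul_cancel₀ _ hne]
  ring

lemma edgeQuadForm_nonneg {ι : Type*} {e : Finset ι} (he : 2 ≤ #e) (x : ι → ℝ) :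
    0 ≤ edgeQuadForm e x := by
  have : (2 : ℝ) ≤ #e := by exact_mod_cast he
  rw [edgeQuadForm_eq_div he]
  have := sum_nonneg fun i (_ : i ∈ e) => sq_nonneg (x i)
  exact div_nonneg (by nlinarith [sq_nonneg (∑ i ∈ e, x i)]) (by linarith)

lemma edgeQuadForm_pos {ι : Type*} {e : Finset ι} (he : 3 ≤ #e) {x : ι → ℝ} {i : ι}
    (hi : i ∈ e) (hx : x i ≠ 0) : 0 < edgeQuadForm e x := by
  have : (3 : ℝ) ≤ #e := by exact_mod_cast he
  rw [edgeQuadForm_eq_div (by omega)]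
  have : 0 < ∑ j ∈ e, x j ^ 2 :=
    sum_pos' (fun j _ => sq_nonneg (x j)) ⟨i, hi, by positivity⟩
  apply div_pos <;> nlinarith [sq_nonneg (∑ j ∈ e, x j)]

section

variable {n : ℕ}

lemma dotProduct_diagonal_hdeg_mulVec (E : Finset (Finset (Fin n))) (x : Fin n → ℝ) :
    x ⬝ᵥ (diagonal (fun i => (hdeg E i : ℝ)) *ᵥ x) = ∑ e ∈ E, ∑ i ∈ e, x i ^ 2 := by
  simp only [dotProduct, mulVec_diagonal, hdeg, card_filter, Nat.cast_sum, Nat.cast_ite,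
    Nat.cast_one, Nat.cast_zero, sum_mul, mul_sum]
  rw [sum_comm]
  refine sum_congr rfl fun e _ => ?_
  simp only [ite_mul, one_mul, zero_mul, mul_ite, mul_zero, sum_ite_mem, univ_inter, sq]

lemma adjMat_apply_eq_sum (E : Finset (Finset (Fin n))) (i j : Fin n) :
    adjMat E i j = ∑ e ∈ E, if i ∈ e ∧ j ∈ e ∧ i ≠ j then 1 / ((#e : ℝ) - 1) else 0 := by
  by_cases h : i = j <;> simp [adjMat, edgesBetween, sum_filter, h]

lemma dotProduct_adjMat_mulVec (E : Finset (Finset (Fin n))) (x : Fin n → ℝ) :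
    x ⬝ᵥ (adjMat E *ᵥ x)
      = ∑ e ∈ E, ((∑ i ∈ e, x i) ^ 2 - ∑ i ∈ e, x i ^ 2) / (#e - 1) := by
  simp only [dotProduct, mulVec, adjMat_apply_eq_sum, sum_mul, mul_sum]
  rw [sum_congr rfl fun i _ => sum_comm, sum_comm]
  refine sum_congr rfl fun e _ => ?_
  rw [← sum_sum_ite_ne_eq_sq_sub, sum_div, ← Fintype.sum_ite_mem e]
  refine sum_congr rfl fun i _ => ?_
  rw [sum_div, ← Fintype.sum_ite_mem e]
  split_ifs with hi
  · refine sum_congr rfl fun j _ => ?_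
    by_cases hj : j ∈ e <;> by_cases hij : i = j <;> simp [*, mul_div_assoc, inv_mul_eq_div]
  · simp [hi]

lemma dotProduct_signlessLap_mulVec (E : Finset (Finset (Fin n))) (x : Fin n → ℝ) :
    x ⬝ᵥ (signlessLap E *ᵥ x) = ∑ e ∈ E, edgeQuadForm e x := by
  rw [signlessLap, add_mulVec, dotProduct_add, dotProduct_diagonal_hdeg_mulVec,
    dotProduct_adjMat_mulVec, ← sum_add_distrib]
  rfl

lemma adjMat_isHermitian (E : Finset (Finset (Fin n))) : (adjMat E).IsHermitian := by
  ext i j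
  simp only [conjTranspose_apply, star_trivial, adjMat_apply_eq_sum]
  refine sum_congr rfl fun e _ => ?_
  simp only [and_left_comm (a := j ∈ e), ne_comm]

lemma signlessLap_isHermitian (E : Finset (Finset (Fin n))) : (signlessLap E).IsHermitian :=
  (isHermitian_diagonal _).add (adjMat_isHermitian E)

lemma signlessLap_posDef {E : Finset (Finset (Fin n))} (hE : ∀ e ∈ E, 3 ≤ #e)
    (hcover : ∀ i, ∃ e ∈ E, i ∈ e) : (signlessLap E).PosDef := by
  refine .of_dotProduct_mulVec_pos (signlessLap_isHermitian E) fun x hx => ?_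
  obtain ⟨i, hi⟩ := Function.ne_iff.mp hx
  obtain ⟨e, he, hie⟩ := hcover i
  rw [star_trivial, dotProduct_signlessLap_mulVec]
  exact sum_pos' (fun e he => edgeQuadForm_nonneg (by linarith [hE e he]) x)
    ⟨e, he, edgeQuadForm_pos (hE e he) hie hi⟩

lemma Conn.exists_mem_edge {E : Finset (Finset (Fin n))} (hc : Conn E) {j : Fin n}
    (hj : ∃ e ∈ E, j ∈ e) (i : Fin n) : ∃ e ∈ E, i ∈ e := by
  rcases (hc i j).cases_head with rfl | ⟨_, ⟨_, e, he, hie, _⟩, _⟩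
  · exact hj
  · exact ⟨e, he, hie⟩

lemma qmin_pos_of_posDef [NeZero n] {M : Matrix (Fin n) (Fin n) ℝ} (hM : M.PosDef) :
    0 < qmin M := by
  obtain ⟨i, hi⟩ := exists_eq_ciInf_of_finite (f := hM.1.eigenvalues)
  rw [qmin, hM.1.spectrum_real_eq_range_eigenvalues, ← iInf, ← hi]
  exact hM.eigenvalues_pos i

end

theorem stmt_9 (n k : ℕ) (hk : 3 ≤ k) (E : Finset (Finset (Fin n)))
    (hE : E.Nonempty) (hU : IsUniform k E) (hc : Conn E) :
    0 < qmin (signlessLap E) := by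
  have hcard : ∀ e ∈ E, 3 ≤ #e := fun e he => hU e he ▸ hk
  obtain ⟨e, he⟩ := hE
  obtain ⟨j, hj⟩ : e.Nonempty := card_pos.mp (by linarith [hcard e he])
  have : NeZero n := ⟨j.pos.ne'⟩
  exact qmin_pos_of_posDef (signlessLap_posDef hcard (hc.exists_mem_edge ⟨e, he, hj⟩))
end

section
/- For each integer n₁ ≥ 2, the (n₁+1)-uniform hypergraph H on n₁+1 vertices with exactly one hyperedge (the full vertex set) has signless Laplacian spectrum {2 (multiplicity 1), 1 − 1/n₁ (multiplicity n₁)}, hence its signless Laplacian spread equals 1 + 1/n₁. Consequently the infimum of s_Q(H) over all hypergraphs with finitely many vertices and at least one hyperedge equals 1. -/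
open Finset

/-!
The one-edge signless Laplacian on `n + 1` vertices is `(1 - 1/n) I + (1/n) J`, a rank-one
perturbation of a scalar matrix, so the matrix determinant lemma gives its characteristic
polynomial `(X - 2) (X - (1 - 1/n))^n`.

For the lower bound, let `e` be a hyperedge with `k ≥ 2` vertices. Testing `Q` against unit
vectors gives `qmin ≤ d_i`, and testing it against the indicator of `e` gives
`k qmax ≥ ∑_{i ∈ e} ∑_{j ∈ e} Q i j ≥ ∑_{i ∈ e} (d_i + 1)`, because every off-diagonal entry
inside `e` is at least `1/(k-1)`. Averaging over `e` yields `qmax - qmin ≥ 1`, and the spreads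
`1 + 1/n` of the one-edge hypergraphs approach this bound.
-/

open Matrix Polynomial

namespace Matrix

variable {m : ℕ} {M : Matrix (Fin m) (Fin m) ℝ}

lemma le_qmax {μ : ℝ} (hμ : μ ∈ spectrum ℝ M) : μ ≤ qmax M :=
  le_csSup M.finite_real_spectrum.bddAbove hμ

lemma qmin_le {μ : ℝ} (hμ : μ ∈ spectrum ℝ M) : qmin M ≤ μ :=
  csInf_le M.finite_real_spectrum.bddBelow hμ

namespace IsHermitian

lemma posSemidef_sub_qmin (hM : M.IsHermitian) :
    (M - algebraMap ℝ _ (qmin M)).PosSemidef := by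
  refine posSemidef_iff_isHermitian_and_spectrum_nonneg.2
    ⟨IsSelfAdjoint.sub hM (.algebraMap _ (.all _)), ?_⟩
  rw [← spectrum.sub_singleton_eq]
  rintro _ ⟨μ, hμ, c, rfl, rfl⟩
  exact sub_nonneg.2 (qmin_le hμ)

lemma posSemidef_qmax_sub (hM : M.IsHermitian) :
    (algebraMap ℝ _ (qmax M) - M).PosSemidef := by
  refine posSemidef_iff_isHermitian_and_spectrum_nonneg.2
    ⟨IsSelfAdjoint.sub (.algebraMap _ (.all _)) hM, ?_⟩
  rw [← spectrum.singleton_sub_eq]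
  rintro _ ⟨c, rfl, μ, hμ, rfl⟩
  exact sub_nonneg.2 (le_qmax hμ)

lemma qmin_mul_dotProduct_le (hM : M.IsHermitian) (x : Fin m → ℝ) :
    qmin M * (x ⬝ᵥ x) ≤ x ⬝ᵥ (M *ᵥ x) := by
  have := hM.posSemidef_sub_qmin.dotProduct_mulVec_nonneg x
  simpa [sub_mulVec, Algebra.algebraMap_eq_smul_one, smul_mulVec] using this

lemma dotProduct_mulVec_le_qmax (hM : M.IsHermitian) (x : Fin m → ℝ) :
    x ⬝ᵥ (M *ᵥ x) ≤ qmax M * (x ⬝ᵥ x) := by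
  have := hM.posSemidef_qmax_sub.dotProduct_mulVec_nonneg x
  simpa [sub_mulVec, Algebra.algebraMap_eq_smul_one, smul_mulVec] using this

lemma qmin_le_apply_self (hM : M.IsHermitian) (i : Fin m) : qmin M ≤ M i i := by
  simpa using hM.qmin_mul_dotProduct_le (Pi.single i 1)

end IsHermitian

end Matrix

section ConstantOffDiagonal

variable {K : Type*} [Field K]

lemma det_scalar_sub_of_ite (n : ℕ) (a b t : K) (ht : t ≠ a - b) :
    (scalar (Fin (n + 1)) t - of fun i j => if i = j then a else b).det
      = (t - (a + n * b)) * (t - (a - b)) ^ n := by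
  set s := t - (a - b) with hs
  have hs0 : s ≠ 0 := sub_ne_zero.2 ht
  have hrank_one : scalar (Fin (n + 1)) t - (of fun i j => if i = j then a else b)
      = s • (1 + replicateCol Unit (fun _ : Fin (n + 1) => -(b / s)) *
          replicateRow Unit (fun _ : Fin (n + 1) => (1 : K))) := by
    ext i j
    rcases eq_or_ne i j with rfl | hij
    · simp [mul_apply, mul_add, mul_div_cancel₀ b hs0]
      linear_combination -hs
    · simp [hij, mul_apply, mul_div_cancel₀ _ hs0]
  rw [hrank_one, det_smul, det_one_add_replicateCol_mul_replicateRow]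
  simp only [Fintype.card_fin, pow_succ, dotProduct, mul_neg, one_mul, sum_neg_distrib, sum_const,
    card_univ, nsmul_eq_mul, Nat.cast_add, Nat.cast_one]
  field_simp
  ring

lemma charpoly_of_ite [Infinite K] (n : ℕ) (a b : K) :
    (of fun i j : Fin (n + 1) => if i = j then a else b).charpoly
      = (X - C (a + n * b)) * (X - C (a - b)) ^ n := by
  refine eq_of_infinite_eval_eq _ _ ((Set.finite_singleton (a - b)).infinite_compl.mono ?_)
  intro t ht
  rw [Set.mem_ofPred_eq, eval_charpoly, det_scalar_sub_of_ite n a b t ht]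
  simp

end ConstantOffDiagonal

lemma Polynomial.rootMultiplicity_X_sub_C_mul_X_sub_C_pow_left {R : Type*} [CommRing R]
    [IsDomain R] {a b : R} (hab : a ≠ b) (n : ℕ) :
    ((X - C a) * (X - C b) ^ n).rootMultiplicity a = 1 := by
  classical
  rw [rootMultiplicity_mul (mul_ne_zero (X_sub_C_ne_zero a) (pow_ne_zero _ (X_sub_C_ne_zero b))),
    rootMultiplicity_X_sub_C_self, rootMultiplicity_eq_zero]
  simp [sub_ne_zero.2 hab]

lemma Polynomial.rootMultiplicity_X_sub_C_mul_X_sub_C_pow_right {R : Type*} [CommRing R]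
    [IsDomain R] {a b : R} (hab : a ≠ b) (n : ℕ) :
    ((X - C a) * (X - C b) ^ n).rootMultiplicity b = n := by
  rw [rootMultiplicity_mul (mul_ne_zero (X_sub_C_ne_zero a) (pow_ne_zero _ (X_sub_C_ne_zero b))),
    rootMultiplicity_X_sub_C_pow, rootMultiplicity_eq_zero, zero_add]
  simp [sub_ne_zero.2 hab.symm]

section Hypergraph

variable {m : ℕ} (E : Finset (Finset (Fin m)))

lemma signlessLap_apply_self (i : Fin m) : signlessLap E i i = hdeg E i := by
  simp [signlessLap, adjMat]

lemma signlessLap_apply_of_ne {i j : Fin m} (hij : i ≠ j) :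
    signlessLap E i j = ∑ e ∈ edgesBetween E i j, 1 / ((e.card : ℝ) - 1) := by
  simp [signlessLap, adjMat, hij]

lemma isHermitian_signlessLap : (signlessLap E).IsHermitian := by
  ext i j
  rcases eq_or_ne i j with rfl | hij
  · rfl
  · simp only [conjTranspose_apply, star_trivial, signlessLap_apply_of_ne E hij,
      signlessLap_apply_of_ne E hij.symm, edgesBetween, and_comm]

variable {E}

lemma one_lt_card_of_mem_edgesBetween {i j : Fin m} (hij : i ≠ j) {e : Finset (Fin m)}
    (he : e ∈ edgesBetween E i j) : 1 < e.card :=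
  Finset.one_lt_card.2 ⟨i, (mem_filter.1 he).2.1, j, (mem_filter.1 he).2.2, hij⟩

lemma one_div_card_sub_one_le_signlessLap {e : Finset (Fin m)} (he : e ∈ E) {i j : Fin m}
    (hi : i ∈ e) (hj : j ∈ e) (hij : i ≠ j) :
    1 / ((e.card : ℝ) - 1) ≤ signlessLap E i j := by
  rw [signlessLap_apply_of_ne E hij]
  refine Finset.single_le_sum (f := fun f : Finset (Fin m) => 1 / ((f.card : ℝ) - 1))
    (fun f hf => ?_) (mem_filter.2 ⟨he, hi, hj⟩)
  have : (1 : ℝ) < f.card := by exact_mod_cast one_lt_card_of_mem_edgesBetween hij hf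
  exact div_nonneg zero_le_one (by linarith)

lemma hdeg_add_one_le_sum_signlessLap {e : Finset (Fin m)} (he : e ∈ E) (hcard : 2 ≤ e.card)
    {i : Fin m} (hi : i ∈ e) : (hdeg E i : ℝ) + 1 ≤ ∑ j ∈ e, signlessLap E i j := by
  have hcard' : (e.card : ℝ) - 1 ≠ 0 := by
    have : (2 : ℝ) ≤ e.card := by exact_mod_cast hcard
    linarith
  have hoff : (1 : ℝ) ≤ ∑ j ∈ e.erase i, signlessLap E i j := by
    have := Finset.card_nsmul_le_sum (e.erase i) _ _ fun j hj =>
      one_div_card_sub_one_le_signlessLap he hi (mem_of_mem_erase hj) (ne_of_mem_erase hj).symm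
    rwa [card_erase_of_mem hi, nsmul_eq_mul, Nat.cast_sub (by omega), Nat.cast_one,
      mul_one_div_cancel hcard'] at this
  rw [← add_sum_erase _ _ hi, signlessLap_apply_self]
  linarith

lemma one_le_qmax_sub_qmin_signlessLap {e : Finset (Fin m)} (he : e ∈ E) (hcard : 2 ≤ e.card) :
    1 ≤ qmax (signlessLap E) - qmin (signlessLap E) := by
  have hQ := isHermitian_signlessLap E
  set x : Fin m → ℝ := fun i => if i ∈ e then 1 else 0
  have hxx : x ⬝ᵥ x = e.card := by simp [x, dotProduct]
  have hxQx : x ⬝ᵥ (signlessLap E *ᵥ x) = ∑ i ∈ e, ∑ j ∈ e, signlessLap E i j := by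
    simp [x, dotProduct, mulVec, Finset.sum_ite_mem]
  have hupper : ∑ i ∈ e, ((hdeg E i : ℝ) + 1) ≤ qmax (signlessLap E) * e.card := by
    calc ∑ i ∈ e, ((hdeg E i : ℝ) + 1)
        ≤ ∑ i ∈ e, ∑ j ∈ e, signlessLap E i j :=
          sum_le_sum fun i hi => hdeg_add_one_le_sum_signlessLap he hcard hi
      _ = x ⬝ᵥ (signlessLap E *ᵥ x) := hxQx.symm
      _ ≤ qmax (signlessLap E) * e.card := hxx ▸ hQ.dotProduct_mulVec_le_qmax x
  have hlower : qmin (signlessLap E) * e.card ≤ ∑ i ∈ e, (hdeg E i : ℝ) := by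
    rw [mul_comm, ← nsmul_eq_mul]
    exact Finset.card_nsmul_le_sum _ _ _ fun i _ => signlessLap_apply_self E i ▸ hQ.qmin_le_apply_self i
  have hpos : (0 : ℝ) < e.card := by exact_mod_cast (by omega : 0 < e.card)
  rw [sum_add_distrib, sum_const, nsmul_one] at hupper
  nlinarith

end Hypergraph

section SingleEdge

variable (n : ℕ)

lemma signlessLap_singleton_univ :
    signlessLap ({univ} : Finset (Finset (Fin (n + 1))))
      = of fun i j => if i = j then (1 : ℝ) else 1 / n := by
  ext i j
  rcases eq_or_ne i j with rfl | hij
  · simp [signlessLap_apply_self, hdeg, filter_singleton]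
  · simp [signlessLap_apply_of_ne _ hij, hij, edgesBetween, filter_singleton]

variable {n}

lemma charpoly_signlessLap_singleton_univ (hn : n ≠ 0) :
    (signlessLap ({univ} : Finset (Finset (Fin (n + 1))))).charpoly
      = (X - C 2) * (X - C (1 - 1 / (n : ℝ))) ^ n := by
  rw [signlessLap_singleton_univ, charpoly_of_ite, mul_one_div_cancel (Nat.cast_ne_zero.2 hn)]
  norm_num

lemma one_sub_one_div_lt_two (hn : n ≠ 0) : 1 - 1 / (n : ℝ) < 2 := by
  have : 0 < 1 / (n : ℝ) := by positivity
  linarith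

lemma spectrum_signlessLap_singleton_univ (hn : n ≠ 0) :
    spectrum ℝ (signlessLap ({univ} : Finset (Finset (Fin (n + 1)))))
      = {2, 1 - 1 / (n : ℝ)} := by
  ext μ
  simp [mem_spectrum_iff_isRoot_charpoly, charpoly_signlessLap_singleton_univ hn, sub_eq_zero, hn]

lemma qmax_sub_qmin_signlessLap_singleton_univ (hn : n ≠ 0) :
    qmax (signlessLap ({univ} : Finset (Finset (Fin (n + 1)))))
      - qmin (signlessLap ({univ} : Finset (Finset (Fin (n + 1))))) = 1 + 1 / (n : ℝ) := by
  have hlt := one_sub_one_div_lt_two hn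
  rw [qmax, qmin, spectrum_signlessLap_singleton_univ hn, csSup_pair, csInf_pair,
    sup_eq_left.2 hlt.le, inf_eq_right.2 hlt.le]
  ring

lemma isUniform_singleton_univ (m : ℕ) : IsUniform m ({univ} : Finset (Finset (Fin m))) := by
  simp [IsUniform]

lemma conn_singleton_univ (m : ℕ) : Conn ({univ} : Finset (Finset (Fin m))) := by
  intro i j
  rcases eq_or_ne i j with rfl | hij
  · exact .refl
  · exact .single ⟨hij, univ, mem_singleton_self _, mem_univ i, mem_univ j⟩

end SingleEdge

lemma csInf_eq_one_of_one_add_one_div_mem {S : Set ℝ} (h_le : ∀ s ∈ S, 1 ≤ s)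
    (h_mem : ∀ n : ℕ, 2 ≤ n → 1 + 1 / (n : ℝ) ∈ S) : sInf S = 1 := by
  refine csInf_eq_of_forall_ge_of_forall_gt_exists_lt ⟨_, h_mem 2 le_rfl⟩ h_le fun w hw => ?_
  obtain ⟨n, hn⟩ := exists_nat_gt (max 2 (1 / (w - 1)))
  have h2 : (2 : ℝ) < n := (le_max_left _ _).trans_lt hn
  have hw' : 1 < n * (w - 1) := (div_lt_iff₀ (sub_pos.2 hw)).1 ((le_max_right _ _).trans_lt hn)
  refine ⟨_, h_mem n (by exact_mod_cast h2.le), ?_⟩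
  have : 1 / (n : ℝ) < w - 1 := by
    rw [div_lt_iff₀ (by linarith)]
    linarith
  linarith

theorem stmt_14 (n₁ : ℕ) (hn : 2 ≤ n₁) :
    spectrum ℝ (signlessLap ({Finset.univ} : Finset (Finset (Fin (n₁ + 1)))))
        = {(2 : ℝ), 1 - 1 / (n₁ : ℝ)} ∧
    (Matrix.charpoly
        (signlessLap ({Finset.univ} : Finset (Finset (Fin (n₁ + 1)))))).rootMultiplicity
        (2 : ℝ) = 1 ∧
    (Matrix.charpoly
        (signlessLap ({Finset.univ} : Finset (Finset (Fin (n₁ + 1)))))).rootMultiplicity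
        (1 - 1 / (n₁ : ℝ)) = n₁ ∧
    qmax (signlessLap ({Finset.univ} : Finset (Finset (Fin (n₁ + 1)))))
        - qmin (signlessLap ({Finset.univ} : Finset (Finset (Fin (n₁ + 1)))))
      = 1 + 1 / (n₁ : ℝ) ∧
    sInf {s : ℝ | ∃ (m : ℕ) (k : ℕ) (E : Finset (Finset (Fin m))),
        2 ≤ m ∧ 2 ≤ k ∧ IsUniform k E ∧ Conn E ∧ E.Nonempty ∧
        s = qmax (signlessLap E) - qmin (signlessLap E)} = 1 := by
  have hn₀ : n₁ ≠ 0 := by omega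
  have hne : (2 : ℝ) ≠ 1 - 1 / (n₁ : ℝ) := (one_sub_one_div_lt_two hn₀).ne'
  refine ⟨spectrum_signlessLap_singleton_univ hn₀, ?_, ?_,
    qmax_sub_qmin_signlessLap_singleton_univ hn₀, csInf_eq_one_of_one_add_one_div_mem ?_ ?_⟩
  · rw [charpoly_signlessLap_singleton_univ hn₀, rootMultiplicity_X_sub_C_mul_X_sub_C_pow_left hne]
  · rw [charpoly_signlessLap_singleton_univ hn₀, rootMultiplicity_X_sub_C_mul_X_sub_C_pow_right hne]
  · rintro _ ⟨m, k, E, -, hk, hu, -, ⟨e, he⟩, rfl⟩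
    exact one_le_qmax_sub_qmin_signlessLap he (hu e he ▸ hk)
  · intro n hn
    exact ⟨n + 1, n + 1, {univ}, by omega, by omega, isUniform_singleton_univ _,
      conn_singleton_univ _, singleton_nonempty _,
      (qmax_sub_qmin_signlessLap_singleton_univ (by omega)).symm⟩
end
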